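/- arXiv:1002.1893 — 4 statements merged into one kernel-verified Lean document; each statement's English description precedes it below -/
import Mathlib

section
/- Let V be the set of unit-norm real product vectors in (ℝ^M)^{⊗N}. A real symmetric matrix Q on (ℝ^M)^{⊗N} satisfies ⟨ψ|Q|ψ⟩ = 0 for all ψ ∈ V if and only if ∑_τ Q^{T_τ} = 0, where the sum runs over all 2^N subsets τ ⊆ {1,…,N} and Q^{T_τ} denotes the partial transpose of Q on the tensor factors in τ. -/
/-!
Write `q_Q(a)` for the value of the quadratic form of `Q` at the product vector `⊗ₖ aₖ`.
A partial transpose only relabels the double sum defining `q`, so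
`q_{∑_τ Q^{T_τ}} = 2^N q_Q`, which gives one direction.

Conversely, `q_Q` is homogeneous of degree two in each factor, so it vanishes on all product
vectors once it vanishes on the unit ones. Polarize in every factor: with
`a^σ_k = e_{s_k} - e_{s'_k}` for `k ∈ σ` and `e_{s_k} + e_{s'_k}` otherwise, the identity
`(e + f) ⊗ (e + f) - (e - f) ⊗ (e - f) = 2 (e ⊗ f + f ⊗ e)` in each factor shows that
`∑_σ (-1)^|σ| q_Q(a^σ) = 2^N (∑_τ Q^{T_τ}) s s'`.
-/

/-- The partial transpose of a matrix on `(ℝ^M)^{⊗N}` (identified with matrices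
indexed by multi-indices `Fin N → Fin M`) on the tensor factors in `τ`. -/
def partialTranspose {N M : ℕ}
    (Q : Matrix (Fin N → Fin M) (Fin N → Fin M) ℝ) (τ : Finset (Fin N)) :
    Matrix (Fin N → Fin M) (Fin N → Fin M) ℝ :=
  fun s s' => Q (fun k => if k ∈ τ then s' k else s k) (fun k => if k ∈ τ then s k else s' k)

open Finset

variable {ι α : Type*} [Fintype ι]

lemma prod_single_apply_mul_single_apply [DecidableEq α] (u v t t' : ι → α) :
    ∏ k, (Pi.single (u k) (1 : ℝ) : α → ℝ) (t k) * (Pi.single (v k) (1 : ℝ) : α → ℝ) (t' k) =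
      if t = u ∧ t' = v then 1 else 0 := by
  simp only [Pi.single_apply, ite_zero_mul_ite_zero, mul_one, Fintype.prod_boole, forall_and,
    ← funext_iff]

lemma prod_piecewise_univ [DecidableEq ι] {M : Type*} [CommMonoid M] (σ : Finset ι)
    (f g : ι → M) :
    ∏ k, σ.piecewise f g k = (∏ k ∈ σ, f k) * ∏ k ∈ univ \ σ, g k := by
  rw [prod_piecewise, univ_inter]

section ProductForm

variable [DecidableEq ι] [Fintype α]

def productForm (Q : Matrix (ι → α) (ι → α) ℝ) (a : ι → α → ℝ) : ℝ :=
  ∑ s, ∑ s', (∏ k, a k (s k)) * Q s s' * ∏ k, a k (s' k)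

@[simp]
lemma productForm_zero (a : ι → α → ℝ) : productForm (0 : Matrix (ι → α) (ι → α) ℝ) a = 0 := by
  simp [productForm]

lemma productForm_sum {β : Type*} (t : Finset β) (Q : β → Matrix (ι → α) (ι → α) ℝ)
    (a : ι → α → ℝ) : productForm (∑ i ∈ t, Q i) a = ∑ i ∈ t, productForm (Q i) a := by
  simp only [productForm, Matrix.sum_apply, mul_sum, sum_mul]
  exact (sum_congr rfl fun s _ => sum_comm).trans sum_comm

lemma productForm_smul (Q : Matrix (ι → α) (ι → α) ℝ) (c : ι → ℝ) (a : ι → α → ℝ) :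
    productForm Q (fun k => c k • a k) = (∏ k, c k) ^ 2 * productForm Q a := by
  simp only [productForm, Pi.smul_apply, smul_eq_mul, prod_mul_distrib, mul_sum]
  exact sum_congr rfl fun s _ => sum_congr rfl fun s' _ => by ring

lemma productForm_eq_zero_of_eq_zero (Q : Matrix (ι → α) (ι → α) ℝ) {a : ι → α → ℝ} {k : ι}
    (hk : a k = 0) : productForm Q a = 0 :=
  Fintype.sum_eq_zero _ fun s => Fintype.sum_eq_zero _ fun s' => by
    rw [prod_eq_zero (mem_univ k) (congrFun hk (s k)), zero_mul, zero_mul]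

lemma productForm_eq_zero_of_forall_sum_sq_eq_one {Q : Matrix (ι → α) (ι → α) ℝ}
    (h : ∀ a : ι → α → ℝ, (∀ k, ∑ j, a k j ^ 2 = 1) → productForm Q a = 0)
    (a : ι → α → ℝ) : productForm Q a = 0 := by
  by_cases hzero : ∃ k, a k = 0
  · obtain ⟨k, hk⟩ := hzero
    exact productForm_eq_zero_of_eq_zero Q hk
  push Not at hzero
  have hpos (k : ι) : 0 < ∑ j, a k j ^ 2 := by
    refine (sum_nonneg fun j _ => sq_nonneg (a k j)).lt_of_ne fun h0 => hzero k ?_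
    funext j
    exact pow_eq_zero_iff two_ne_zero |>.mp <|
      congrFun ((Fintype.sum_eq_zero_iff_of_nonneg fun j => sq_nonneg (a k j)).mp h0.symm) j
  set r : ι → ℝ := fun k => √(∑ j, a k j ^ 2)
  have hr (k : ι) : r k ≠ 0 := (Real.sqrt_pos.mpr (hpos k)).ne'
  have hunit (k : ι) : ∑ j, ((r k)⁻¹ • a k) j ^ 2 = 1 := by
    simp only [Pi.smul_apply, smul_eq_mul, mul_pow, ← mul_sum, inv_pow,
      Real.sq_sqrt (hpos k).le, r]
    exact inv_mul_cancel₀ (hpos k).ne'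
  have ha : a = fun k => r k • ((r k)⁻¹ • a k) := funext fun k => (smul_inv_smul₀ (hr k) _).symm
  rw [ha, productForm_smul, h _ hunit, mul_zero]

end ProductForm

section Polarization

variable [DecidableEq ι] [DecidableEq α]

def polarizationProbe (σ : Finset ι) (s s' : ι → α) : ι → α → ℝ :=
  σ.piecewise (fun k => Pi.single (s k) 1 - Pi.single (s' k) 1)
    (fun k => Pi.single (s k) 1 + Pi.single (s' k) 1)

lemma sum_neg_one_pow_mul_prod_polarizationProbe (s s' t t' : ι → α) :
    ∑ σ : Finset ι, (-1) ^ #σ *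
        ∏ k, polarizationProbe σ s s' k (t k) * polarizationProbe σ s s' k (t' k) =
      2 ^ Fintype.card ι *
        ∑ τ : Finset ι, if t = τ.piecewise s' s ∧ t' = τ.piecewise s s' then 1 else 0 := by
  set e : α → α → ℝ := fun i => Pi.single i 1
  have hprobe (σ : Finset ι) :
      ∏ k, polarizationProbe σ s s' k (t k) * polarizationProbe σ s s' k (t' k) =
        (∏ k ∈ univ \ σ, (e (s k) + e (s' k)) (t k) * (e (s k) + e (s' k)) (t' k)) *
          ∏ k ∈ σ, (e (s k) - e (s' k)) (t k) * (e (s k) - e (s' k)) (t' k) := by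
    rw [mul_comm, ← prod_piecewise_univ]
    refine prod_congr rfl fun k _ => ?_
    by_cases hk : k ∈ σ <;> simp [hk, e, polarizationProbe]
  have hswap (τ : Finset ι) :
      (∏ k ∈ τ, e (s' k) (t k) * e (s k) (t' k)) *
          ∏ k ∈ univ \ τ, e (s k) (t k) * e (s' k) (t' k) =
        if t = τ.piecewise s' s ∧ t' = τ.piecewise s s' then 1 else 0 := by
    rw [← prod_single_apply_mul_single_apply, ← prod_piecewise_univ]
    refine prod_congr rfl fun k _ => ?_
    by_cases hk : k ∈ τ <;> simp [hk, e]
  calc ∑ σ : Finset ι, (-1) ^ #σ *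
        ∏ k, polarizationProbe σ s s' k (t k) * polarizationProbe σ s s' k (t' k)
      = ∏ k, ((e (s k) + e (s' k)) (t k) * (e (s k) + e (s' k)) (t' k) -
          (e (s k) - e (s' k)) (t k) * (e (s k) - e (s' k)) (t' k)) := by
        simp only [prod_sub, powerset_univ, hprobe, mul_assoc]
    _ = ∏ k, 2 * (e (s' k) (t k) * e (s k) (t' k) + e (s k) (t k) * e (s' k) (t' k)) := by
        congr! 1 with k
        simp only [Pi.add_apply, Pi.sub_apply]
        ring
    _ = _ := by
        rw [prod_mul_distrib, prod_const, card_univ, prod_add, powerset_univ]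
        simp only [hswap]

lemma sum_neg_one_pow_mul_productForm_polarizationProbe [Fintype α]
    (Q : Matrix (ι → α) (ι → α) ℝ) (s s' : ι → α) :
    ∑ σ : Finset ι, (-1) ^ #σ * productForm Q (polarizationProbe σ s s') =
      2 ^ Fintype.card ι * ∑ τ : Finset ι, Q (τ.piecewise s' s) (τ.piecewise s s') := by
  have hexpand (σ : Finset ι) : (-1) ^ #σ * productForm Q (polarizationProbe σ s s') =
      ∑ t, ∑ t', Q t t' * ((-1) ^ #σ *
        ∏ k, polarizationProbe σ s s' k (t k) * polarizationProbe σ s s' k (t' k)) := by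
    simp only [productForm, mul_sum, prod_mul_distrib]
    exact sum_congr rfl fun t _ => sum_congr rfl fun t' _ => by ring
  calc ∑ σ : Finset ι, (-1) ^ #σ * productForm Q (polarizationProbe σ s s')
      = ∑ t, ∑ t', Q t t' * ∑ σ : Finset ι, (-1) ^ #σ *
          ∏ k, polarizationProbe σ s s' k (t k) * polarizationProbe σ s s' k (t' k) := by
        simp only [hexpand, mul_sum]
        rw [sum_comm]
        exact sum_congr rfl fun t _ => sum_comm
    _ = 2 ^ Fintype.card ι * ∑ τ : Finset ι, ∑ t, ∑ t', Q t t' *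
          if t = τ.piecewise s' s ∧ t' = τ.piecewise s s' then 1 else 0 := by
        simp only [sum_neg_one_pow_mul_prod_polarizationProbe, mul_sum, mul_left_comm (Q _ _)]
        exact (sum_congr rfl fun t _ => sum_comm).trans sum_comm
    _ = _ := by
        simp [ite_and]

end Polarization

section PartialTranspose

variable {N M : ℕ}

lemma partialTranspose_apply (Q : Matrix (Fin N → Fin M) (Fin N → Fin M) ℝ)
    (τ : Finset (Fin N)) (s s' : Fin N → Fin M) :
    partialTranspose Q τ s s' = Q (τ.piecewise s' s) (τ.piecewise s s') :=
  rfl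

lemma productForm_partialTranspose (Q : Matrix (Fin N → Fin M) (Fin N → Fin M) ℝ)
    (τ : Finset (Fin N)) (a : Fin N → Fin M → ℝ) :
    productForm (partialTranspose Q τ) a = productForm Q a := by
  have hswap : Function.Involutive fun p : (Fin N → Fin M) × (Fin N → Fin M) =>
      (τ.piecewise p.2 p.1, τ.piecewise p.1 p.2) := fun p => by
    ext k <;> by_cases hk : k ∈ τ <;> simp [hk]
  simp only [productForm, ← Fintype.sum_prod_type']
  refine Fintype.sum_equiv hswap.toPerm _ _ fun p => ?_
  have hprod : (∏ k, a k (τ.piecewise p.2 p.1 k)) * ∏ k, a k (τ.piecewise p.1 p.2 k) =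
      (∏ k, a k (p.1 k)) * ∏ k, a k (p.2 k) := by
    simp only [← prod_mul_distrib]
    refine prod_congr rfl fun k _ => ?_
    by_cases hk : k ∈ τ <;> simp [hk, mul_comm]
  simp only [Function.Involutive.coe_toPerm, partialTranspose_apply]
  linear_combination Q (τ.piecewise p.2 p.1) (τ.piecewise p.1 p.2) * hprod.symm

lemma productForm_sum_partialTranspose (Q : Matrix (Fin N → Fin M) (Fin N → Fin M) ℝ)
    (a : Fin N → Fin M → ℝ) :
    productForm (∑ τ, partialTranspose Q τ) a = 2 ^ N * productForm Q a := by
  simp [productForm_sum, productForm_partialTranspose]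

end PartialTranspose

theorem symm_vanishes_on_product_vectors_iff_sum_partial_transposes_zero_general
    (N M : ℕ)
    (Q : Matrix (Fin N → Fin M) (Fin N → Fin M) ℝ) :
    (∀ a : Fin N → Fin M → ℝ, (∀ k, ∑ j, (a k j) ^ 2 = 1) →
        ∑ s, ∑ s', (∏ k, a k (s k)) * Q s s' * (∏ k, a k (s' k)) = 0) ↔
      ∑ τ : Finset (Fin N), partialTranspose Q τ = 0 := by
  constructor
  · intro h
    ext s s'
    have hpolar := sum_neg_one_pow_mul_productForm_polarizationProbe Q s s'
    simp only [productForm_eq_zero_of_forall_sum_sq_eq_one h, mul_zero, sum_const_zero,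
      Fintype.card_fin] at hpolar
    simp only [Matrix.sum_apply, partialTranspose_apply, Matrix.zero_apply]
    exact (mul_eq_zero.mp hpolar.symm).resolve_left (by positivity)
  · intro h a _
    have hscaled : (2 : ℝ) ^ N * productForm Q a = 0 := by
      rw [← productForm_sum_partialTranspose, h, productForm_zero]
    exact (mul_eq_zero.mp hscaled).resolve_left (by positivity)

/-- A real symmetric matrix `Q` on `(ℝ^M)^{⊗N}` annihilates all unit-norm real product
vectors iff the sum of its partial transposes over all `2^N` subsets vanishes. -/
theorem symm_vanishes_on_product_vectors_iff_sum_partial_transposes_zero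
    (N M : ℕ) (hM : 0 < M)
    (Q : Matrix (Fin N → Fin M) (Fin N → Fin M) ℝ) (hQ : Q.IsSymm) :
    (∀ a : Fin N → Fin M → ℝ, (∀ k, ∑ j, (a k j) ^ 2 = 1) →
        ∑ s, ∑ s', (∏ k, a k (s k)) * Q s s' * (∏ k, a k (s' k)) = 0) ↔
      ∑ τ : Finset (Fin N), partialTranspose Q τ = 0 :=
  symm_vanishes_on_product_vectors_iff_sum_partial_transposes_zero_general N M Q
end

section
/- With 𝔽 the swap operator on ℝ^M ⊗ ℝ^M and P = 𝟙 − 𝔽 + 𝔽^{T₁}, the rank of P equals 1 + (M² − M)/2. -/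
/-- The flip (swap) operator `𝔽 = ∑_{j,l} |j,l⟩⟨l,j|` on `ℝ^M ⊗ ℝ^M`. -/
def flipOp (M : ℕ) : Matrix (Fin M × Fin M) (Fin M × Fin M) ℝ :=
  fun p q => if p.1 = q.2 ∧ p.2 = q.1 then 1 else 0

/-- The partial transpose on the first factor `𝔽^{T₁} = ∑_{j,l} |j,j⟩⟨l,l|`. -/
def flipOpT1 (M : ℕ) : Matrix (Fin M × Fin M) (Fin M × Fin M) ℝ :=
  fun p q => if p.1 = p.2 ∧ q.1 = q.2 then 1 else 0

lemma P_apply (M : ℕ) (v : Fin M × Fin M → ℝ) (p : Fin M × Fin M) :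
    (1 - flipOp M + flipOpT1 M).mulVecLin v p
      = v p - v (p.2, p.1) + (if p.1 = p.2 then ∑ j, v (j, j) else 0) := by
  simp only [Matrix.mulVecLin_apply, Matrix.add_mulVec, Matrix.sub_mulVec,
    Matrix.one_mulVec, Pi.add_apply, Pi.sub_apply]
  congr 1
  · congr 1
    simp only [Matrix.mulVec, dotProduct, flipOp]
    rw [Finset.sum_congr rfl (g := fun q => if q = (p.2, p.1) then v q else 0)]
    · simp
    · intro q _
      by_cases h : q = (p.2, p.1)
      · subst h; simp
      · rw [if_neg h, if_neg, zero_mul]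
        rintro ⟨h1, h2⟩
        exact h (Prod.ext h2.symm h1.symm)
  · simp only [Matrix.mulVec, dotProduct, flipOpT1]
    by_cases h : p.1 = p.2
    · simp [h, Fintype.sum_prod_type, Finset.sum_ite_eq, ite_mul]
    · simp [h]

abbrev LtPairs (M : ℕ) := {p : Fin M × Fin M // p.1 < p.2}

noncomputable def gFun (M : ℕ) (fc : (LtPairs M → ℝ) × ℝ) : Fin M × Fin M → ℝ :=
  fun p =>
    (if h : p.1 < p.2 then fc.1 ⟨p, h⟩ else
      if h' : p.2 < p.1 then - fc.1 ⟨(p.2, p.1), h'⟩ else 0)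
      + fc.2 * (if p.1 = p.2 then 1 else 0)

noncomputable def gMap (M : ℕ) : ((LtPairs M → ℝ) × ℝ) →ₗ[ℝ] (Fin M × Fin M → ℝ) where
  toFun := gFun M
  map_add' a b := by
    funext p
    simp only [gFun, Prod.fst_add, Prod.snd_add, Pi.add_apply]
    split_ifs <;> ring
  map_smul' c a := by
    funext p
    simp only [gFun, Prod.smul_fst, Prod.smul_snd, Pi.smul_apply, smul_eq_mul,
      RingHom.id_apply]
    split_ifs <;> ring

lemma gMap_inj (M : ℕ) (hM : 0 < M) : Function.Injective (gMap M) := by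
  rw [injective_iff_map_eq_zero]
  rintro ⟨f, c⟩ h
  have h' : ∀ p, gFun M (f, c) p = 0 := fun p => congrFun h p
  have hc : c = 0 := by
    have := h' (⟨0, hM⟩, ⟨0, hM⟩)
    simpa [gFun] using this
  have hf : f = 0 := by
    funext q
    have := h' q.1
    rw [gFun, dif_pos q.2, if_neg (ne_of_lt q.2), hc] at this
    simpa using this
  simp [hf, hc, Prod.ext_iff]

lemma range_eq (M : ℕ) (hM : 0 < M) :
    LinearMap.range (1 - flipOp M + flipOpT1 M).mulVecLin = LinearMap.range (gMap M) := by
  apply le_antisymm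
  · rintro _ ⟨v, rfl⟩
    refine ⟨(fun q => v q.1 - v (q.1.2, q.1.1), ∑ j, v (j, j)), ?_⟩
    funext p
    show gFun M _ p = _
    rw [P_apply]
    simp only [gFun]
    rcases lt_trichotomy p.1 p.2 with h | h | h
    · rw [dif_pos h]; simp only [if_neg (ne_of_lt h)]; ring
    · have hp : (p.2, p.1) = p := Prod.ext h.symm h
      rw [dif_neg (by simp [h]), dif_neg (by simp [h])]
      simp only [if_pos h]
      rw [hp]; ring
    · rw [dif_neg (asymm h), dif_pos h]
      simp only [if_neg (ne_of_gt h)]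
      have hp : ((p.2, p.1).2, (p.2, p.1).1) = p := rfl
      rw [hp]; ring
  · rintro _ ⟨⟨f, c⟩, rfl⟩
    set v : Fin M × Fin M → ℝ := fun p =>
      (if h : p.1 < p.2 then f ⟨p, h⟩ else
        if h' : p.2 < p.1 then - f ⟨(p.2, p.1), h'⟩ else 0) / 2
        + (c / M) * (if p.1 = p.2 then 1 else 0) with hv
    refine ⟨v, ?_⟩
    have hveq : ∀ p : Fin M × Fin M, p.1 = p.2 → v p = c / M := by
      intro p h
      simp only [hv]
      rw [dif_neg (by simp [h]), dif_neg (by simp [h]), if_pos h]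
      ring
    have htrace : ∑ j, v (j, j) = c := by
      rw [Finset.sum_congr rfl (fun j _ => hveq (j, j) rfl)]
      rw [Finset.sum_const, Finset.card_univ, Fintype.card_fin, nsmul_eq_mul]
      field_simp
    have hvlt : ∀ (p : Fin M × Fin M) (h : p.1 < p.2), v p = f ⟨p, h⟩ / 2 := by
      intro p h
      simp only [hv]
      rw [dif_pos h, if_neg (ne_of_lt h)]
      ring
    have hvgt : ∀ (p : Fin M × Fin M) (h : p.1 < p.2), v (p.2, p.1) = - f ⟨p, h⟩ / 2 := by
      intro p h
      simp only [hv]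
      rw [dif_neg (asymm h), dif_pos h, if_neg (ne_of_gt h)]
      show (- f ⟨p, h⟩) / 2 + c / ↑M * 0 = - f ⟨p, h⟩ / 2
      ring
    funext p
    show _ = gFun M (f, c) p
    rw [P_apply, htrace]
    simp only [gFun]
    rcases lt_trichotomy p.1 p.2 with h | h | h
    · rw [hvlt p h, hvgt p h, dif_pos h]
      simp only [if_neg (ne_of_lt h)]
      ring
    · have hp : (p.2, p.1) = p := Prod.ext h.symm h
      rw [dif_neg (by simp [h]), dif_neg (by simp [h])]
      simp only [if_pos h]
      rw [hp]
      ring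
    · have h2 : (p.2, p.1).1 < (p.2, p.1).2 := h
      rw [dif_neg (asymm h), dif_pos h]
      simp only [if_neg (ne_of_gt h)]
      rw [hvlt (p.2, p.1) h2]
      rw [show v p = - f ⟨(p.2, p.1), h2⟩ / 2 from hvgt (p.2, p.1) h2]
      ring

lemma card_ltPairs (M : ℕ) : Fintype.card (LtPairs M) = (M ^ 2 - M) / 2 := by
  rw [Fintype.card_subtype]
  set s := Finset.univ.filter (fun p : Fin M × Fin M => p.1 < p.2) with hs
  set t := Finset.univ.filter (fun p : Fin M × Fin M => p.2 < p.1) with ht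
  have hst : s.card = t.card := by
    apply Finset.card_bij (fun p _ => (p.2, p.1))
    · intro p hp
      simp only [hs, ht, Finset.mem_filter, Finset.mem_univ, true_and] at *
      exact hp
    · intro p hp q hq hpq
      exact Prod.ext (congrArg Prod.snd hpq) (congrArg Prod.fst hpq)
    · intro p hp
      refine ⟨(p.2, p.1), ?_, rfl⟩
      simp only [hs, ht, Finset.mem_filter, Finset.mem_univ, true_and] at *
      exact hp
  have hdiag : (Finset.univ.filter (fun p : Fin M × Fin M => p.1 = p.2)).card = M := by
    rw [show Finset.univ.filter (fun p : Fin M × Fin M => p.1 = p.2)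
        = Finset.univ.image (fun j : Fin M => (j, j)) from ?_]
    · rw [Finset.card_image_of_injective _ (fun a b hab => congrArg Prod.fst hab)]
      simp
    · ext p
      simp only [Finset.mem_filter, Finset.mem_univ, true_and, Finset.mem_image]
      constructor
      · intro h; exact ⟨p.1, Prod.ext rfl h⟩
      · rintro ⟨j, _, rfl⟩; rfl
  have hunion : s ∪ t = Finset.univ.filter (fun p : Fin M × Fin M => ¬ p.1 = p.2) := by
    rw [hs, ht, ← Finset.filter_or]
    apply Finset.filter_congr
    intro p _
    simp [lt_or_lt_iff_ne, eq_comm, ne_eq]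
  have hdisj : Disjoint s t := by
    rw [Finset.disjoint_filter]
    intro p _ h1
    exact asymm h1
  have hcard2 : s.card + t.card = M ^ 2 - M := by
    rw [← Finset.card_union_of_disjoint hdisj, hunion]
    have := Finset.card_filter_add_card_filter_not
      (s := (Finset.univ : Finset (Fin M × Fin M))) (p := fun p => p.1 = p.2)
    have hc : Fintype.card (Fin M × Fin M) = M ^ 2 := by
      simp [Fintype.card_prod]; ring
    beta_reduce at this
    rw [Finset.card_univ, hc] at this
    omega
  omega

/-- The rank of `P = 𝟙 − 𝔽 + 𝔽^{T₁}` equals `1 + (M² − M)/2`. -/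
theorem one_sub_flip_add_flipT1_rank (M : ℕ) (hM : 0 < M) :
    (1 - flipOp M + flipOpT1 M).rank = 1 + (M ^ 2 - M) / 2 := by
  rw [Matrix.rank, range_eq M hM, LinearMap.finrank_range_of_inj (gMap_inj M hM)]
  rw [Module.finrank_prod, Module.finrank_self, Module.finrank_pi, card_ltPairs]
  omega
end

section
/- Ando joint concavity (two-factor, equal exponents case): for r₁, r₂ > 0 with r₁ + r₂ ≤ 1, the map (X,Y) ↦ X^{r₁} ⊗ Y^{r₂} is jointly concave on pairs of positive semidefinite operators on finite-dimensional Hilbert spaces: if X = ∑_α λ_α X_α and Y = ∑_α λ_α Y_α with λ_α ≥ 0, ∑_α λ_α = 1, and all X_α, Y_α positive semidefinite, then ∑_α λ_α (X_α^{r₁} ⊗ Y_α^{r₂}) ≤ X^{r₁} ⊗ Y^{r₂} in the Loewner order. -/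
/-!
Ando's midpoint argument. Put `Pₐ(p, q) = Xₐ^p ⊗ Yₐ^q` and `P̄(p, q) = X̄^p ⊗ Ȳ^q` with
`X̄ = ∑ₐ wₐ Xₐ`, `Ȳ = ∑ₐ wₐ Yₐ`, and call `(p, q)` good when `∑ₐ wₐ Pₐ(p, q) ≤ P̄(p, q)`.
The points `(0,0)`, `(1,0)`, `(0,1)` are good (with equality) and good points are closed under
midpoints, so every dyadic point of the triangle is good; continuity of the powers in nonzero
exponents gives the rest.

For the midpoint step put `R = Pₐ(p₁/2, q₁/2)` and `S = Pₐ(p₂/2, q₂/2)`: the block matrix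
`[[R², RS], [SR, S²]]` is positive, and summing over `a` and using that `(p₁, q₁)` and `(p₂, q₂)`
are good gives `[[C, K], [K, D]] ≥ 0` for `C = P̄(p₁, q₁)`, `D = P̄(p₂, q₂)` and
`K = ∑ₐ wₐ Pₐ(midpoint)`. Since `C` and `D` commute this forces `K ≤ (CD)^{1/2} = P̄(midpoint)`:
the Schur complement gives `(C^{-1/2} K C^{-1/2})² ≤ D C⁻¹`, and the square root is operator
monotone.
-/

open scoped ComplexOrder Kronecker MatrixOrder
open Filter Topology Matrix

lemma IsSelfAdjoint.le_sqrt_of_mul_self_le {A : Type*} [CStarAlgebra A] [PartialOrder A]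
    [StarOrderedRing A] {a b : A} (ha : IsSelfAdjoint a) (h : a * a ≤ b) : a ≤ CFC.sqrt b := calc
  a ≤ CFC.abs a := sub_nonneg.1 <| by
    rw [CFC.abs_sub_self a ha]; exact smul_nonneg (by norm_num) (CFC.negPart_nonneg a)
  _ = CFC.sqrt (a * a) := by rw [CFC.abs, ha.star_eq]
  _ ≤ CFC.sqrt b := CFC.sqrt_le_sqrt _ _ h

namespace Matrix

section ConjDiag

variable {𝕜 k : Type*} [RCLike 𝕜] [Fintype k] [DecidableEq k]

noncomputable def conjDiag (U : unitary (Matrix k k 𝕜)) (μ : k → ℝ) : Matrix k k 𝕜 :=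
  Unitary.conjStarAlgAut 𝕜 _ U (diagonal (RCLike.ofReal ∘ μ))

lemma IsHermitian.cfc_eq_conjDiag {A : Matrix k k 𝕜} (hA : A.IsHermitian) (f : ℝ → ℝ) :
    hA.cfc f = conjDiag hA.eigenvectorUnitary (f ∘ hA.eigenvalues) := rfl

variable (U : unitary (Matrix k k 𝕜))

lemma conjDiag_eq (μ : k → ℝ) :
    conjDiag U μ = (U : Matrix k k 𝕜) * diagonal (RCLike.ofReal ∘ μ) * star (U : Matrix k k 𝕜) :=
  Unitary.conjStarAlgAut_apply _ _

lemma conjDiag_one : conjDiag U 1 = 1 := by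
  simp [conjDiag, Function.comp_def]

lemma conjDiag_mul (μ ν : k → ℝ) : conjDiag U μ * conjDiag U ν = conjDiag U (μ * ν) := by
  simp only [conjDiag, ← map_mul, diagonal_mul_diagonal]
  congr 2; ext; simp

lemma conjDiag_add (μ ν : k → ℝ) : conjDiag U μ + conjDiag U ν = conjDiag U (μ + ν) := by
  simp only [conjDiag, ← map_add, diagonal_add]
  congr 2; ext; simp

lemma isSelfAdjoint_conjDiag (μ : k → ℝ) : IsSelfAdjoint (conjDiag U μ) := by
  simp only [conjDiag, IsSelfAdjoint, ← map_star]
  congr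
  simp [star_eq_conjTranspose, diagonal_conjTranspose, Function.comp_def, Pi.star_def]

lemma conjDiag_nonneg {μ : k → ℝ} (hμ : 0 ≤ μ) : 0 ≤ conjDiag U μ := by
  rw [nonneg_iff_posSemidef, conjDiag_eq, star_eq_conjTranspose]
  exact (PosSemidef.diagonal fun i => by simpa using hμ i).mul_mul_conjTranspose_same _

lemma posDef_conjDiag {μ : k → ℝ} (hμ : ∀ i, 0 < μ i) : (conjDiag U μ).PosDef := by
  rw [conjDiag_eq, IsUnit.posDef_star_right_conjugate_iff Unitary.isUnit_coe, posDef_diagonal_iff]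
  simpa using hμ

lemma inv_conjDiag {μ : k → ℝ} (hμ : ∀ i, μ i ≠ 0) : (conjDiag U μ)⁻¹ = conjDiag U μ⁻¹ :=
  inv_eq_right_inv <| by
    rw [conjDiag_mul, ← conjDiag_one U]
    congr 1; ext i; exact mul_inv_cancel₀ (hμ i)

lemma sqrt_conjDiag {μ : k → ℝ} (hμ : 0 ≤ μ) :
    CFC.sqrt (conjDiag U μ) = conjDiag U (fun i => √(μ i)) := by
  rw [CFC.sqrt_eq_iff _ _ (conjDiag_nonneg U hμ) (conjDiag_nonneg U fun i => Real.sqrt_nonneg _),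
    conjDiag_mul]
  congr 1; ext i; exact Real.mul_self_sqrt (hμ i)

lemma continuous_conjDiag : Continuous (conjDiag U) := by
  rw [show conjDiag U = _ from funext (conjDiag_eq U)]
  fun_prop

lemma conjDiag_kronecker {m : Type*} [Fintype m] [DecidableEq m] (V : unitary (Matrix m m 𝕜))
    (μ : k → ℝ) (ν : m → ℝ) :
    conjDiag U μ ⊗ₖ conjDiag V ν =
      conjDiag ⟨_, kronecker_mem_unitary U.2 V.2⟩ (fun ij => μ ij.1 * ν ij.2) := by
  simp only [conjDiag_eq, star_eq_conjTranspose, conjTranspose_kronecker, mul_kronecker_mul,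
    diagonal_kronecker_diagonal]
  congr 3; ext ij; simp

end ConjDiag

section Blocks

variable {𝕜 l m n o : Type*} [RCLike 𝕜]

lemma sum_fromBlocks {ι α : Type*} [AddCommMonoid α] (s : Finset ι) (A : ι → Matrix n l α)
    (B : ι → Matrix n m α) (C : ι → Matrix o l α) (D : ι → Matrix o m α) :
    ∑ a ∈ s, fromBlocks (A a) (B a) (C a) (D a) =
      fromBlocks (∑ a ∈ s, A a) (∑ a ∈ s, B a) (∑ a ∈ s, C a) (∑ a ∈ s, D a) := by
  ext (i | i) (j | j) <;> simp [Matrix.sum_apply]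

lemma PosSemidef.fromBlocks_zero [Fintype m] [Fintype n] {A : Matrix m m 𝕜} {D : Matrix n n 𝕜}
    (hA : A.PosSemidef) (hD : D.PosSemidef) : (fromBlocks A 0 0 D).PosSemidef := by
  refine .of_dotProduct_mulVec_nonneg (hA.isHermitian.fromBlocks (by simp) hD.isHermitian)
    fun x => ?_
  rw [← Sum.elim_comp_inl_inr x, fromBlocks_mulVec, Function.star_sumElim]
  simp only [zero_mulVec, add_zero, zero_add, Sum.elim_comp_inl, Sum.elim_comp_inr,
    sumElim_dotProduct_sumElim]
  exact add_nonneg (hA.dotProduct_mulVec_nonneg _) (hD.dotProduct_mulVec_nonneg _)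

lemma posSemidef_fromBlocks_conjTranspose_mul [Fintype m] [Fintype n] (R S : Matrix m n 𝕜) :
    (fromBlocks (Rᴴ * R) (Rᴴ * S) (Sᴴ * R) (Sᴴ * S)).PosSemidef := by
  rw [← fromRows_mul_fromCols, ← conjTranspose_fromCols_eq_fromRows_conjTranspose]
  exact posSemidef_conjTranspose_mul_self _

lemma sum_kronecker {ι α : Type*} [NonUnitalNonAssocSemiring α] (s : Finset ι)
    (A : ι → Matrix l m α) (B : Matrix n o α) : (∑ a ∈ s, A a) ⊗ₖ B = ∑ a ∈ s, A a ⊗ₖ B := by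
  ext; simp [Matrix.sum_apply, Finset.sum_mul]

lemma kronecker_sum {ι α : Type*} [NonUnitalNonAssocSemiring α] (s : Finset ι)
    (A : Matrix l m α) (B : ι → Matrix n o α) : A ⊗ₖ (∑ a ∈ s, B a) = ∑ a ∈ s, A ⊗ₖ B a := by
  ext; simp [Matrix.sum_apply, Finset.mul_sum]

end Blocks

section GeometricMean

open scoped Matrix.Norms.L2Operator

variable {k : Type*} [Fintype k] [DecidableEq k] (U : unitary (Matrix k k ℂ))

lemma le_conjDiag_sqrt_mul_of_mul_inv_mul_le {c d : k → ℝ} (hc : ∀ i, 0 < c i) (hd : 0 ≤ d)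
    {K : Matrix k k ℂ} (hK : IsSelfAdjoint K) (h : K * conjDiag U c⁻¹ * K ≤ conjDiag U d) :
    K ≤ conjDiag U (fun i => √(c i * d i)) := by
  have hsc : ∀ i, √(c i) ≠ 0 := fun i => (Real.sqrt_pos.2 (hc i)).ne'
  obtain ⟨S, hS⟩ : ∃ S, S = conjDiag U (fun i => (√(c i))⁻¹) := ⟨_, rfl⟩
  obtain ⟨T, hT⟩ : ∃ T, T = conjDiag U (fun i => √(c i)) := ⟨_, rfl⟩
  have hSS : S * S = conjDiag U c⁻¹ := by
    rw [hS, conjDiag_mul]; congr 1; ext i; simp [← mul_inv, Real.mul_self_sqrt (hc i).le]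
  have hSDS : S * conjDiag U d * S = conjDiag U (d / c) := by
    rw [hS, conjDiag_mul, conjDiag_mul]; congr 1; ext i
    simp only [Pi.mul_apply, Pi.div_apply]
    rw [mul_comm, ← mul_assoc, ← mul_inv, Real.mul_self_sqrt (hc i).le, div_eq_inv_mul]
  have hTS : T * S = 1 := by
    rw [hT, hS, conjDiag_mul, ← conjDiag_one U]; congr 1; ext i; exact mul_inv_cancel₀ (hsc i)
  have hST : S * T = 1 := by
    rw [hT, hS, conjDiag_mul, ← conjDiag_one U]; congr 1; ext i; exact inv_mul_cancel₀ (hsc i)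
  have hTDT : T * conjDiag U (fun i => √(d i / c i)) * T = conjDiag U (fun i => √(c i * d i)) := by
    rw [hT, conjDiag_mul, conjDiag_mul]; congr 1; ext i
    simp only [Pi.mul_apply]
    rw [Real.sqrt_div' _ (hc i).le, Real.sqrt_mul (hc i).le]
    field_simp
  have hS_sa : IsSelfAdjoint S := hS ▸ isSelfAdjoint_conjDiag U _
  have hL_sq : S * K * S * (S * K * S) ≤ conjDiag U (d / c) := calc
    S * K * S * (S * K * S) = S * (K * (S * S) * K) * S := by simp only [mul_assoc]
    _ ≤ S * conjDiag U d * S := by rw [hSS]; exact hS_sa.conjugate_le_conjugate h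
    _ = conjDiag U (d / c) := hSDS
  have hL_le : S * K * S ≤ conjDiag U (fun i => √(d i / c i)) := by
    rw [← sqrt_conjDiag U fun i => div_nonneg (hd i) (hc i).le]
    exact (hK.conjugate_self hS_sa).le_sqrt_of_mul_self_le hL_sq
  calc K = T * (S * K * S) * T := by
        rw [← mul_assoc, ← mul_assoc, hTS, one_mul, mul_assoc, hST, mul_one]
    _ ≤ T * conjDiag U (fun i => √(d i / c i)) * T :=
      (hT ▸ isSelfAdjoint_conjDiag U _).conjugate_le_conjugate hL_le
    _ = conjDiag U (fun i => √(c i * d i)) := hTDT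

lemma le_sqrt_conjDiag_mul_of_posSemidef_fromBlocks {c d : k → ℝ} (hc : 0 ≤ c) (hd : 0 ≤ d)
    {K : Matrix k k ℂ} (hK : K.IsHermitian)
    (h : (fromBlocks (conjDiag U c) K K (conjDiag U d)).PosSemidef) :
    K ≤ CFC.sqrt (conjDiag U c * conjDiag U d) := by
  rw [conjDiag_mul, sqrt_conjDiag U (mul_nonneg hc hd)]
  have hpert : ∀ ε > 0, K ≤ conjDiag U (fun i => √((c i + ε) * (d i + ε))) := by
    intro ε hε
    have hcε : ∀ i, 0 < (c + fun _ : k => ε) i := fun i => add_pos_of_nonneg_of_pos (hc i) hε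
    have hε_psd : (conjDiag U fun _ => ε).PosSemidef :=
      nonneg_iff_posSemidef.1 (conjDiag_nonneg U fun _ => hε.le)
    have hblock := h.add (hε_psd.fromBlocks_zero hε_psd)
    rw [fromBlocks_add, add_zero, conjDiag_add, conjDiag_add] at hblock
    have hpd := posDef_conjDiag U hcε
    let := hpd.isUnit.invertible
    -- `fromBlocks₁₁` wants the lower-left block written as `Kᴴ`
    conv at hblock => enter [1, 3]; rw [← hK.eq]
    rw [hpd.fromBlocks₁₁, inv_conjDiag U fun i => (hcε i).ne', hK.eq, ← le_iff] at hblock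
    exact le_conjDiag_sqrt_mul_of_mul_inv_mul_le U hcε (fun i => add_nonneg (hd i) hε.le)
      hK.isSelfAdjoint hblock
  have hlim : Tendsto (fun ε => conjDiag U (fun i => √((c i + ε) * (d i + ε)))) (𝓝[>] 0)
      (𝓝 (conjDiag U fun i => √(c i * d i))) := by
    have : Continuous fun ε : ℝ => fun i => √((c i + ε) * (d i + ε)) := by fun_prop
    exact (((continuous_conjDiag U).comp this).tendsto' 0 _ (by simp)).mono_left
      nhdsWithin_le_nhds
  exact ge_of_tendsto hlim (eventually_nhdsWithin_of_forall hpert)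

end GeometricMean

section KronRpow

variable {𝕜 n m : Type*} [RCLike 𝕜] [Fintype n] [DecidableEq n] [Fintype m] [DecidableEq m]

noncomputable def kronRpow (X : Matrix n n 𝕜) (Y : Matrix m m 𝕜) (p q : ℝ) :
    Matrix (n × m) (n × m) 𝕜 :=
  cfc (fun t : ℝ => t ^ p) X ⊗ₖ cfc (fun t : ℝ => t ^ q) Y

variable {X : Matrix n n 𝕜} {Y : Matrix m m 𝕜}

lemma kronRpow_eq_conjDiag (hX : X.IsHermitian) (hY : Y.IsHermitian) (p q : ℝ) :
    kronRpow X Y p q =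
      conjDiag ⟨_, kronecker_mem_unitary hX.eigenvectorUnitary.2 hY.eigenvectorUnitary.2⟩
        (fun ij => hX.eigenvalues ij.1 ^ p * hY.eigenvalues ij.2 ^ q) := by
  rw [kronRpow, hX.cfc_eq, hY.cfc_eq, hX.cfc_eq_conjDiag, hY.cfc_eq_conjDiag, conjDiag_kronecker]
  rfl

lemma isHermitian_kronRpow (hX : X.IsHermitian) (hY : Y.IsHermitian) (p q : ℝ) :
    (kronRpow X Y p q).IsHermitian := by
  rw [kronRpow_eq_conjDiag hX hY]
  exact (isSelfAdjoint_conjDiag _ _).isHermitian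

lemma eigenvalues_rpow_mul_nonneg (hX : X.PosSemidef) (hY : Y.PosSemidef) (p q : ℝ) :
    0 ≤ fun ij : n × m => hX.1.eigenvalues ij.1 ^ p * hY.1.eigenvalues ij.2 ^ q :=
  fun _ => mul_nonneg (Real.rpow_nonneg (hX.eigenvalues_nonneg _) _)
    (Real.rpow_nonneg (hY.eigenvalues_nonneg _) _)

lemma kronRpow_nonneg (hX : X.PosSemidef) (hY : Y.PosSemidef) (p q : ℝ) :
    0 ≤ kronRpow X Y p q := by
  rw [kronRpow_eq_conjDiag hX.1 hY.1]
  exact conjDiag_nonneg _ (eigenvalues_rpow_mul_nonneg hX hY p q)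

lemma kronRpow_mul_kronRpow (hX : X.PosSemidef) (hY : Y.PosSemidef) {p q p' q' : ℝ}
    (hp : 0 ≤ p) (hq : 0 ≤ q) (hp' : 0 ≤ p') (hq' : 0 ≤ q') :
    kronRpow X Y p q * kronRpow X Y p' q' = kronRpow X Y (p + p') (q + q') := by
  simp only [kronRpow_eq_conjDiag hX.1 hY.1, conjDiag_mul]
  congr 1; ext ij
  simp only [Pi.mul_apply]
  rw [Real.rpow_add_of_nonneg (hX.eigenvalues_nonneg _) hp hp',
    Real.rpow_add_of_nonneg (hY.eigenvalues_nonneg _) hq hq']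
  ring

lemma kronRpow_zero_zero (hX : X.IsHermitian) (hY : Y.IsHermitian) : kronRpow X Y 0 0 = 1 := by
  simp only [kronRpow, Real.rpow_zero, cfc_const_one ℝ X hX.isSelfAdjoint,
    cfc_const_one ℝ Y hY.isSelfAdjoint, one_kronecker_one]

lemma kronRpow_one_zero (hX : X.IsHermitian) (hY : Y.IsHermitian) : kronRpow X Y 1 0 = X ⊗ₖ 1 := by
  simp only [kronRpow, Real.rpow_zero, Real.rpow_one, cfc_id' ℝ X hX.isSelfAdjoint,
    cfc_const_one ℝ Y hY.isSelfAdjoint]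

lemma kronRpow_zero_one (hX : X.IsHermitian) (hY : Y.IsHermitian) : kronRpow X Y 0 1 = 1 ⊗ₖ Y := by
  simp only [kronRpow, Real.rpow_zero, Real.rpow_one, cfc_id' ℝ Y hY.isSelfAdjoint,
    cfc_const_one ℝ X hX.isSelfAdjoint]

/-- Continuity fails at exponent `0` when `0` is an eigenvalue, since `0 ^ 0 = 1`. -/
lemma continuousAt_kronRpow (hX : X.IsHermitian) (hY : Y.IsHermitian) {p q : ℝ}
    (hp : p ≠ 0) (hq : q ≠ 0) : ContinuousAt (Function.uncurry (kronRpow X Y)) (p, q) := by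
  rw [show Function.uncurry (kronRpow X Y) = _ from
    funext fun pq : ℝ × ℝ => kronRpow_eq_conjDiag hX hY pq.1 pq.2]
  refine (continuous_conjDiag _).continuousAt.comp (continuousAt_pi.2 fun ij => ?_)
  exact ((Real.continuousAt_const_rpow' hp).comp continuousAt_fst).mul
    ((Real.continuousAt_const_rpow' hq).comp continuousAt_snd)

lemma posSemidef_fromBlocks_kronRpow (hX : X.PosSemidef) (hY : Y.PosSemidef) {p₁ q₁ p₂ q₂ : ℝ}
    (hp₁ : 0 ≤ p₁) (hq₁ : 0 ≤ q₁) (hp₂ : 0 ≤ p₂) (hq₂ : 0 ≤ q₂) :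
    (fromBlocks (kronRpow X Y p₁ q₁) (kronRpow X Y ((p₁ + p₂) / 2) ((q₁ + q₂) / 2))
      (kronRpow X Y ((p₁ + p₂) / 2) ((q₁ + q₂) / 2)) (kronRpow X Y p₂ q₂)).PosSemidef := by
  have h₁ : 0 ≤ p₁ / 2 := by positivity
  have h₂ : 0 ≤ q₁ / 2 := by positivity
  have h₃ : 0 ≤ p₂ / 2 := by positivity
  have h₄ : 0 ≤ q₂ / 2 := by positivity
  have := posSemidef_fromBlocks_conjTranspose_mul (kronRpow X Y (p₁ / 2) (q₁ / 2))
    (kronRpow X Y (p₂ / 2) (q₂ / 2))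
  rw [(isHermitian_kronRpow hX.1 hY.1 _ _).eq, (isHermitian_kronRpow hX.1 hY.1 _ _).eq,
    kronRpow_mul_kronRpow hX hY h₁ h₂ h₁ h₂, kronRpow_mul_kronRpow hX hY h₁ h₂ h₃ h₄,
    kronRpow_mul_kronRpow hX hY h₃ h₄ h₁ h₂, kronRpow_mul_kronRpow hX hY h₃ h₄ h₃ h₄] at this
  convert this using 3 <;> ring

lemma sqrt_kronRpow_mul_kronRpow (hX : X.PosSemidef) (hY : Y.PosSemidef) {p q p' q' : ℝ}
    (hp : 0 ≤ p) (hq : 0 ≤ q) (hp' : 0 ≤ p') (hq' : 0 ≤ q') :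
    CFC.sqrt (kronRpow X Y p q * kronRpow X Y p' q') =
      kronRpow X Y ((p + p') / 2) ((q + q') / 2) := by
  rw [kronRpow_mul_kronRpow hX hY hp hq hp' hq']
  conv_lhs => rw [← add_halves (p + p'), ← add_halves (q + q')]
  rw [← kronRpow_mul_kronRpow hX hY (by positivity) (by positivity) (by positivity) (by positivity),
    CFC.sqrt_mul_self _ (kronRpow_nonneg hX hY _ _)]

end KronRpow

section SumSmulKronRpow

variable {𝕜 ι n m : Type*} [RCLike 𝕜] [Fintype ι] [Fintype n] [DecidableEq n] [Fintype m]
  [DecidableEq m] {w : ι → ℝ} {X : ι → Matrix n n 𝕜} {Y : ι → Matrix m m 𝕜}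

lemma sum_smul_kronRpow_zero_zero (hX : ∀ a, (X a).IsHermitian) (hY : ∀ a, (Y a).IsHermitian)
    (hXs : (∑ a, w a • X a).IsHermitian) (hYs : (∑ a, w a • Y a).IsHermitian)
    (hw : ∑ a, w a = 1) :
    ∑ a, w a • kronRpow (X a) (Y a) 0 0 = kronRpow (∑ a, w a • X a) (∑ a, w a • Y a) 0 0 := by
  simp only [kronRpow_zero_zero (hX _) (hY _), kronRpow_zero_zero hXs hYs, ← Finset.sum_smul, hw,
    one_smul]

lemma sum_smul_kronRpow_one_zero (hX : ∀ a, (X a).IsHermitian) (hY : ∀ a, (Y a).IsHermitian)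
    (hXs : (∑ a, w a • X a).IsHermitian) (hYs : (∑ a, w a • Y a).IsHermitian) :
    ∑ a, w a • kronRpow (X a) (Y a) 1 0 = kronRpow (∑ a, w a • X a) (∑ a, w a • Y a) 1 0 := by
  simp only [kronRpow_one_zero (hX _) (hY _), kronRpow_one_zero hXs hYs, sum_kronecker,
    smul_kronecker]

lemma sum_smul_kronRpow_zero_one (hX : ∀ a, (X a).IsHermitian) (hY : ∀ a, (Y a).IsHermitian)
    (hXs : (∑ a, w a • X a).IsHermitian) (hYs : (∑ a, w a • Y a).IsHermitian) :
    ∑ a, w a • kronRpow (X a) (Y a) 0 1 = kronRpow (∑ a, w a • X a) (∑ a, w a • Y a) 0 1 := by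
  simp only [kronRpow_zero_one (hX _) (hY _), kronRpow_zero_one hXs hYs, kronecker_sum,
    kronecker_smul]

end SumSmulKronRpow

section Midpoint

variable {ι n m : Type*} [Fintype ι] [Fintype n] [DecidableEq n] [Fintype m] [DecidableEq m]
  {w : ι → ℝ} {X : ι → Matrix n n ℂ} {Y : ι → Matrix m m ℂ} {A : Matrix n n ℂ} {B : Matrix m m ℂ}

theorem sum_smul_kronRpow_midpoint_le (hw : 0 ≤ w) (hX : ∀ a, (X a).PosSemidef)
    (hY : ∀ a, (Y a).PosSemidef) (hA : A.PosSemidef) (hB : B.PosSemidef) {p₁ q₁ p₂ q₂ : ℝ}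
    (hp₁ : 0 ≤ p₁) (hq₁ : 0 ≤ q₁) (hp₂ : 0 ≤ p₂) (hq₂ : 0 ≤ q₂)
    (h₁ : ∑ a, w a • kronRpow (X a) (Y a) p₁ q₁ ≤ kronRpow A B p₁ q₁)
    (h₂ : ∑ a, w a • kronRpow (X a) (Y a) p₂ q₂ ≤ kronRpow A B p₂ q₂) :
    ∑ a, w a • kronRpow (X a) (Y a) ((p₁ + p₂) / 2) ((q₁ + q₂) / 2) ≤
      kronRpow A B ((p₁ + p₂) / 2) ((q₁ + q₂) / 2) := by
  set K := ∑ a, w a • kronRpow (X a) (Y a) ((p₁ + p₂) / 2) ((q₁ + q₂) / 2)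
  have hK : K.IsHermitian := isSelfAdjoint_sum _ fun a _ =>
    (IsSelfAdjoint.all (w a)).smul (isHermitian_kronRpow (hX a).1 (hY a).1 _ _).isSelfAdjoint
  have hsum : (fromBlocks (∑ a, w a • kronRpow (X a) (Y a) p₁ q₁) K K
      (∑ a, w a • kronRpow (X a) (Y a) p₂ q₂)).PosSemidef := by
    simp only [K, ← sum_fromBlocks, ← fromBlocks_smul, ← nonneg_iff_posSemidef]
    exact Finset.sum_nonneg fun a _ => smul_nonneg (hw a)
      (posSemidef_fromBlocks_kronRpow (hX a) (hY a) hp₁ hq₁ hp₂ hq₂).nonneg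
  have hblock := hsum.add ((le_iff.1 h₁).fromBlocks_zero (le_iff.1 h₂))
  rw [fromBlocks_add, add_sub_cancel, add_zero, add_sub_cancel,
    kronRpow_eq_conjDiag hA.1 hB.1 p₁, kronRpow_eq_conjDiag hA.1 hB.1 p₂] at hblock
  have hK_le := le_sqrt_conjDiag_mul_of_posSemidef_fromBlocks _
    (eigenvalues_rpow_mul_nonneg hA hB _ _) (eigenvalues_rpow_mul_nonneg hA hB _ _) hK hblock
  rwa [← kronRpow_eq_conjDiag, ← kronRpow_eq_conjDiag,
    sqrt_kronRpow_mul_kronRpow hA hB hp₁ hq₁ hp₂ hq₂] at hK_le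

end Midpoint

end Matrix

theorem forall_dyadic_of_midpoint {G : ℝ → ℝ → Prop} (h₀₀ : G 0 0) (h₁₀ : G 1 0) (h₀₁ : G 0 1)
    (hmid : ∀ ⦃p₁ q₁ p₂ q₂ : ℝ⦄, 0 ≤ p₁ → 0 ≤ q₁ → 0 ≤ p₂ → 0 ≤ q₂ → G p₁ q₁ → G p₂ q₂ →
      G ((p₁ + p₂) / 2) ((q₁ + q₂) / 2)) (N a b : ℕ) (hab : a + b ≤ 2 ^ N) :
    G (a / 2 ^ N) (b / 2 ^ N) := by
  induction N generalizing a b with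
  | zero =>
    obtain ⟨rfl, rfl⟩ | ⟨rfl, rfl⟩ | ⟨rfl, rfl⟩ :
        (a = 0 ∧ b = 0) ∨ (a = 1 ∧ b = 0) ∨ (a = 0 ∧ b = 1) := by rw [pow_zero] at hab; omega
    all_goals simpa
  | succ N ih =>
    have hsplit : ∀ c : ℕ, ((((c + 1) / 2 : ℕ) : ℝ) / 2 ^ N + ((c / 2 : ℕ) : ℝ) / 2 ^ N) / 2 =
        c / 2 ^ (N + 1) := fun c => by
      rw [← add_div, ← Nat.cast_add, show (c + 1) / 2 + c / 2 = c by omega, pow_succ, div_div]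
    have := hmid (by positivity) (by positivity) (by positivity) (by positivity)
      (ih ((a + 1) / 2) (b / 2) (by rw [pow_succ] at hab; omega))
      (ih (a / 2) ((b + 1) / 2) (by rw [pow_succ] at hab; omega))
    rwa [hsplit, add_comm (((b / 2 : ℕ) : ℝ) / 2 ^ N), hsplit] at this

theorem le_of_forall_dyadic_le {α : Type*} [TopologicalSpace α] [Preorder α]
    [OrderClosedTopology α] {F H : ℝ → ℝ → α}
    (hdy : ∀ N a b : ℕ, a + b ≤ 2 ^ N → F (a / 2 ^ N) (b / 2 ^ N) ≤ H (a / 2 ^ N) (b / 2 ^ N))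
    {p q : ℝ} (hp : 0 ≤ p) (hq : 0 ≤ q) (hpq : p + q ≤ 1)
    (hF : ContinuousAt (Function.uncurry F) (p, q))
    (hH : ContinuousAt (Function.uncurry H) (p, q)) :
    F p q ≤ H p q := by
  have approx : ∀ {r : ℝ}, 0 ≤ r → Tendsto (fun N : ℕ => (⌊r * 2 ^ N⌋₊ : ℝ) / 2 ^ N) atTop (𝓝 r) :=
    fun hr => (tendsto_nat_floor_mul_div_atTop hr).comp
      (tendsto_pow_atTop_atTop_of_one_lt one_lt_two)
  have hlim := (approx hp).prodMk_nhds (approx hq)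
  refine le_of_tendsto_of_tendsto' (hF.tendsto.comp hlim) (hH.tendsto.comp hlim)
    fun N => hdy N _ _ ?_
  have : (⌊p * 2 ^ N⌋₊ : ℝ) + ⌊q * 2 ^ N⌋₊ ≤ 2 ^ N := calc
    _ ≤ p * 2 ^ N + q * 2 ^ N :=
      add_le_add (Nat.floor_le (by positivity)) (Nat.floor_le (by positivity))
    _ ≤ 2 ^ N := by nlinarith [pow_pos (two_pos (α := ℝ)) N]
  exact_mod_cast this

/-- Ando's joint concavity (two factors): for `r₁, r₂ > 0` with `r₁ + r₂ ≤ 1`, the map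
`(X,Y) ↦ X^{r₁} ⊗ Y^{r₂}` is jointly concave on positive semidefinite matrices:
`∑_α λ_α (X_α^{r₁} ⊗ Y_α^{r₂}) ≤ (∑_α λ_α X_α)^{r₁} ⊗ (∑_α λ_α Y_α)^{r₂}`
in the Loewner order. Fractional powers are via functional calculus. -/
theorem ando_joint_concavity
    {ι n m : Type*} [Fintype ι] [Fintype n] [DecidableEq n] [Fintype m] [DecidableEq m]
    (r₁ r₂ : ℝ) (hr₁ : 0 < r₁) (hr₂ : 0 < r₂) (hr : r₁ + r₂ ≤ 1)
    (w : ι → ℝ) (hw : ∀ α, 0 ≤ w α) (hw1 : ∑ α, w α = 1)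
    (X : ι → Matrix n n ℂ) (Y : ι → Matrix m m ℂ)
    (hX : ∀ α, (X α).PosSemidef) (hY : ∀ α, (Y α).PosSemidef)
    (hXs : (∑ α, w α • X α).IsHermitian) (hYs : (∑ α, w α • Y α).IsHermitian) :
    (hXs.cfc (fun t => t ^ r₁) ⊗ₖ hYs.cfc (fun t => t ^ r₂)
      - ∑ α, w α • ((hX α).1.cfc (fun t => t ^ r₁) ⊗ₖ (hY α).1.cfc (fun t => t ^ r₂))).PosSemidef := by
  have hXs_psd : (∑ α, w α • X α).PosSemidef :=
    nonneg_iff_posSemidef.1 (Finset.sum_nonneg fun α _ => smul_nonneg (hw α) (hX α).nonneg)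
  have hYs_psd : (∑ α, w α • Y α).PosSemidef :=
    nonneg_iff_posSemidef.1 (Finset.sum_nonneg fun α _ => smul_nonneg (hw α) (hY α).nonneg)
  have hX_herm (α : ι) : (X α).IsHermitian := (hX α).1
  have hY_herm (α : ι) : (Y α).IsHermitian := (hY α).1
  simp only [← IsHermitian.cfc_eq]
  let F (p q : ℝ) := ∑ α, w α • kronRpow (X α) (Y α) p q
  let H := kronRpow (∑ α, w α • X α) (∑ α, w α • Y α)
  have hdyadic := forall_dyadic_of_midpoint (G := fun p q => F p q ≤ H p q)
    (sum_smul_kronRpow_zero_zero hX_herm hY_herm hXs hYs hw1).le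
    (sum_smul_kronRpow_one_zero hX_herm hY_herm hXs hYs).le
    (sum_smul_kronRpow_zero_one hX_herm hY_herm hXs hYs).le
    fun _ _ _ _ => sum_smul_kronRpow_midpoint_le hw hX hY hXs_psd hYs_psd
  have hF : ContinuousAt (Function.uncurry F) (r₁, r₂) := tendsto_finsetSum _ fun α _ =>
    (continuousAt_kronRpow (hX_herm α) (hY_herm α) hr₁.ne' hr₂.ne').const_smul (w α)
  open scoped Matrix.Norms.L2Operator in
  exact le_iff.1 <| le_of_forall_dyadic_le hdyadic hr₁.le hr₂.le hr hF
    (continuousAt_kronRpow hXs hYs hr₁.ne' hr₂.ne')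
end

section
/- Any bilinear contraction into ℝ (D = 1 case): if T : ℝ^M × ℝ^M → ℝ is a bilinear form with ‖T‖ ≤ 1 (i.e., |T(a,b)| ≤ ‖a‖‖b‖ for all a, b, Euclidean norms), then T can be dilated to a norm-preserving map; concretely, there exists a bilinear map T̃ : ℝ^M × ℝ^M → ℝ^{D'} for some D' whose first component is T and which satisfies ‖T̃(a,b)‖ = ‖a‖‖b‖ for all a, b. In particular one can take T̃(a,b) = (T(a,b)) ⊕ ((𝟙 − SᵀS)^{1/2}-corrected components) built from the singular value decomposition of the matrix S representing T. -/
/-!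
Write `T a b = ⟪a, S b⟫`; the bound on `T` says `‖S b‖ ≤ ‖b‖`. Lagrange's identity
`⟪a, c⟫² + ½ ∑ᵢⱼ (aᵢ cⱼ - aⱼ cᵢ)² = ‖a‖² ‖c‖²` with `c = S b` completes `T a b ^ 2` to
`‖a‖² ‖S b‖²` by squares of bilinear forms. The positive operator `1 - S⋆S` is a sum of rank-one
operators `uₖ ⟪uₖ, ·⟫`, so `‖b‖² - ‖S b‖² = ∑ₖ ⟪uₖ, b⟫²`, and the forms `aᵢ ⟪uₖ, b⟫` supply the
missing `‖a‖² (‖b‖² - ‖S b‖²)`. Listing `T` followed by all these forms gives the dilation.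
-/

open scoped InnerProductSpace

theorem Finset.sum_mul_sq_add_sum_sq_mul_sub_mul_div_two {ι : Type*} [Fintype ι] (x y : ι → ℝ) :
    (∑ i, x i * y i) ^ 2 + (∑ i, ∑ j, (x i * y j - x j * y i) ^ 2) / 2
      = (∑ i, x i ^ 2) * ∑ i, y i ^ 2 := by
  have hexpand : ∑ i, ∑ j, (x i * y j - x j * y i) ^ 2
      = ∑ i, ∑ j, x i ^ 2 * y j ^ 2 + ∑ i, ∑ j, x j ^ 2 * y i ^ 2
        - 2 * ∑ i, ∑ j, x i * y i * (x j * y j) := by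
    simp only [Finset.mul_sum, ← Finset.sum_add_distrib, ← Finset.sum_sub_distrib]
    exact Finset.sum_congr rfl fun i _ => Finset.sum_congr rfl fun j _ => by ring
  rw [hexpand, Finset.sum_comm (f := fun i j => x j ^ 2 * y i ^ 2), sq (∑ i, x i * y i),
    Finset.sum_mul_sum, Finset.sum_mul_sum]
  ring

theorem EuclideanSpace.inner_sq_add_sum_sq_mul_sub_mul_div_two {ι : Type*} [Fintype ι]
    (a c : EuclideanSpace ℝ ι) :
    ⟪a, c⟫_ℝ ^ 2 + (∑ i, ∑ j, (a i * c j - a j * c i) ^ 2) / 2 = ‖a‖ ^ 2 * ‖c‖ ^ 2 := by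
  simp only [PiLp.inner_apply, EuclideanSpace.norm_sq_eq, Real.norm_eq_abs, sq_abs,
    RCLike.inner_apply, conj_trivial]
  simpa only [mul_comm (c _)] using Finset.sum_mul_sq_add_sum_sq_mul_sub_mul_div_two (ι := ι) a c

section InnerProductSpace

variable {E F : Type*} [NormedAddCommGroup E] [InnerProductSpace ℝ E]
  [NormedAddCommGroup F] [InnerProductSpace ℝ F]

theorem LinearMap.exists_inner_eq [FiniteDimensional ℝ E] {G : Type*} [AddCommGroup G]
    [Module ℝ G] (T : E →ₗ[ℝ] G →ₗ[ℝ] ℝ) : ∃ S : G →ₗ[ℝ] E, ∀ a b, T a b = ⟪a, S b⟫_ℝ := by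
  let v := stdOrthonormalBasis ℝ E
  refine ⟨∑ i, (T (v i)).smulRight (v i), fun a b => ?_⟩
  conv_lhs => rw [← v.sum_repr' a]
  simp [inner_sum, inner_smul_right, real_inner_comm, mul_comm]

theorem LinearMap.norm_le_of_abs_inner_le {S : F →ₗ[ℝ] E}
    (hS : ∀ a b, |⟪a, S b⟫_ℝ| ≤ ‖a‖ * ‖b‖) (b : F) : ‖S b‖ ≤ ‖b‖ := by
  have h : ‖S b‖ ^ 2 ≤ ‖S b‖ * ‖b‖ := by
    simpa [real_inner_self_eq_norm_sq] using hS (S b) b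
  nlinarith [norm_nonneg (S b), norm_nonneg b]

theorem LinearMap.IsPositive.exists_inner_eq_sum_sq [FiniteDimensional ℝ E] {P : E →ₗ[ℝ] E}
    (hP : P.IsPositive) : ∃ (m : ℕ) (u : Fin m → E), ∀ x, ⟪P x, x⟫_ℝ = ∑ k, ⟪u k, x⟫_ℝ ^ 2 := by
  obtain ⟨m, u, hu⟩ := ContinuousLinearMap.isPositive_iff_eq_sum_rankOne.1
    ((LinearMap.isPositive_toContinuousLinearMap_iff P).2 hP)
  refine ⟨m, u, fun x => ?_⟩
  have := congrArg (fun Q : E →L[ℝ] E => ⟪Q x, x⟫_ℝ) hu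
  simpa [sum_inner, real_inner_smul_left, sq] using this

theorem LinearMap.exists_sum_sq_inner_eq_norm_sq_sub_norm_sq [FiniteDimensional ℝ E]
    [FiniteDimensional ℝ F] (S : F →ₗ[ℝ] E) (hS : ∀ x, ‖S x‖ ≤ ‖x‖) :
    ∃ (m : ℕ) (u : Fin m → F), ∀ x, ‖x‖ ^ 2 - ‖S x‖ ^ 2 = ∑ k, ⟪u k, x⟫_ℝ ^ 2 := by
  have hquad : ∀ x, ⟪(1 - S.adjoint ∘ₗ S) x, x⟫_ℝ = ‖x‖ ^ 2 - ‖S x‖ ^ 2 := fun x => by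
    simp [inner_sub_left, LinearMap.adjoint_inner_left]
  have hpos : (1 - S.adjoint ∘ₗ S).IsPositive := by
    refine (LinearMap.isPositive_iff _).2 ⟨LinearMap.isPositive_one.isSymmetric.sub
      (LinearMap.isPositive_adjoint_comp_self S).isSymmetric, fun x => ?_⟩
    rw [hquad, sub_nonneg]
    exact pow_le_pow_left₀ (norm_nonneg _) (hS x) 2
  obtain ⟨m, u, hu⟩ := hpos.exists_inner_eq_sum_sq
  exact ⟨m, u, fun x => (hquad x).symm.trans (hu x)⟩

end InnerProductSpace

section Components

variable {ι κ F : Type*} [Fintype ι] [Fintype κ] [NormedAddCommGroup F] [InnerProductSpace ℝ F]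

noncomputable def wedgeForms (S : F →ₗ[ℝ] EuclideanSpace ℝ ι) :
    ι × ι → EuclideanSpace ℝ ι →ₗ[ℝ] F →ₗ[ℝ] ℝ
  | (i, j) => (√2)⁻¹ • ((PiLp.projₗ 2 (fun _ => ℝ) i).smulRight (PiLp.projₗ 2 (fun _ => ℝ) j ∘ₗ S) -
      (PiLp.projₗ 2 (fun _ => ℝ) j).smulRight (PiLp.projₗ 2 (fun _ => ℝ) i ∘ₗ S))

theorem sum_sq_wedgeForms_apply (S : F →ₗ[ℝ] EuclideanSpace ℝ ι) (a : EuclideanSpace ℝ ι)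
    (b : F) : ∑ p, wedgeForms S p a b ^ 2 = ‖a‖ ^ 2 * ‖S b‖ ^ 2 - ⟪a, S b⟫_ℝ ^ 2 := by
  rw [← EuclideanSpace.inner_sq_add_sum_sq_mul_sub_mul_div_two, add_sub_cancel_left,
    Fintype.sum_prod_type, Finset.sum_div]
  refine Finset.sum_congr rfl fun i _ => ?_
  rw [Finset.sum_div]
  refine Finset.sum_congr rfl fun j _ => ?_
  simp [wedgeForms, mul_pow]
  ring

noncomputable def tensorForms (u : κ → F) : ι × κ → EuclideanSpace ℝ ι →ₗ[ℝ] F →ₗ[ℝ] ℝ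
  | (i, k) => (PiLp.projₗ 2 (fun _ => ℝ) i).smulRight (innerₛₗ ℝ (u k))

theorem sum_sq_tensorForms_apply (u : κ → F) (a : EuclideanSpace ℝ ι) (b : F) :
    ∑ p, tensorForms u p a b ^ 2 = ‖a‖ ^ 2 * ∑ k, ⟪u k, b⟫_ℝ ^ 2 := by
  simp [tensorForms, Fintype.sum_prod_type, mul_pow, EuclideanSpace.norm_sq_eq,
    Finset.sum_mul_sum]

end Components

section Dilation

variable {E F κ : Type*}

def LinearMap.euclideanPi₂ [AddCommGroup E] [Module ℝ E] [AddCommGroup F] [Module ℝ F]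
    (f : κ → E →ₗ[ℝ] F →ₗ[ℝ] ℝ) : E →ₗ[ℝ] F →ₗ[ℝ] EuclideanSpace ℝ κ :=
  LinearMap.mk₂ ℝ (fun a b => WithLp.toLp 2 fun k => f k a b)
    (fun _ _ _ => by ext; simp) (fun _ _ _ => by ext; simp)
    (fun _ _ _ => by ext; simp) (fun _ _ _ => by ext; simp)

theorem exists_norm_preserving_dilation_of_sq_add_sum_sq_eq [NormedAddCommGroup E] [Module ℝ E]
    [NormedAddCommGroup F] [Module ℝ F] [Fintype κ] (T : E →ₗ[ℝ] F →ₗ[ℝ] ℝ)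
    (f : κ → E →ₗ[ℝ] F →ₗ[ℝ] ℝ) (hf : ∀ a b, T a b ^ 2 + ∑ k, f k a b ^ 2 = ‖a‖ ^ 2 * ‖b‖ ^ 2) :
    ∃ (D' : ℕ) (T' : E →ₗ[ℝ] F →ₗ[ℝ] EuclideanSpace ℝ (Fin (D' + 1))),
      (∀ a b, T' a b 0 = T a b) ∧ (∀ a b, ‖T' a b‖ = ‖a‖ * ‖b‖) := by
  let e := (Fintype.equivFin κ).symm
  refine ⟨Fintype.card κ, LinearMap.euclideanPi₂ (Fin.cons T (f ∘ e)), fun a b => rfl,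
    fun a b => ?_⟩
  rw [← sq_eq_sq₀ (norm_nonneg _) (by positivity), mul_pow, ← hf, EuclideanSpace.norm_sq_eq,
    Fin.sum_univ_succ]
  simp [LinearMap.euclideanPi₂, e.sum_comp (fun k => f k a b ^ 2)]

end Dilation

/-- Every bilinear contraction `T : ℝ^M × ℝ^M → ℝ` (i.e. `|T(a,b)| ≤ ‖a‖‖b‖`) can be
dilated to a norm-preserving bilinear map: there is a bilinear map
`T̃ : ℝ^M × ℝ^M → ℝ^{D'}` whose first component is `T` and with `‖T̃(a,b)‖ = ‖a‖‖b‖`. -/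
theorem bilinear_contraction_has_norm_preserving_dilation
    (M : ℕ)
    (T : EuclideanSpace ℝ (Fin M) →ₗ[ℝ] EuclideanSpace ℝ (Fin M) →ₗ[ℝ] ℝ)
    (hT : ∀ a b, |T a b| ≤ ‖a‖ * ‖b‖) :
    ∃ (D' : ℕ) (T' : EuclideanSpace ℝ (Fin M) →ₗ[ℝ] EuclideanSpace ℝ (Fin M) →ₗ[ℝ]
        EuclideanSpace ℝ (Fin (D' + 1))),
      (∀ a b, T' a b 0 = T a b) ∧ (∀ a b, ‖T' a b‖ = ‖a‖ * ‖b‖) := by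
  obtain ⟨S, hS⟩ := T.exists_inner_eq
  have hS_le : ∀ b, ‖S b‖ ≤ ‖b‖ := LinearMap.norm_le_of_abs_inner_le fun a b => hS a b ▸ hT a b
  obtain ⟨m, u, hu⟩ := S.exists_sum_sq_inner_eq_norm_sq_sub_norm_sq hS_le
  refine exists_norm_preserving_dilation_of_sq_add_sum_sq_eq T
    (Sum.elim (wedgeForms S) (tensorForms u)) fun a b => ?_
  rw [Fintype.sum_sum_type]
  simp only [Sum.elim_inl, Sum.elim_inr, sum_sq_wedgeForms_apply, sum_sq_tensorForms_apply, ← hu,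
    hS]
  ring
end
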